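/- On ℝ³, the bracket with structure functions {x,y} = x, {x,z} = −x, {y,z} = −(y+z) (the Jacobi bracket of the bialgebra ((III,0),(VI₀.iv, X₂−X₃)) with σ = 0) satisfies the Jacobi identity {f,{g,h}} + {g,{h,f}} + {h,{f,g}} = 0. -/

import Mathlib

/-- Partial derivative in the `i`-th coordinate direction on `ℝ³`. -/
noncomputable def pd (i : Fin 3) (f : (Fin 3 → ℝ) → ℝ) (q : Fin 3 → ℝ) : ℝ :=
  fderiv ℝ f q (Pi.single i 1)

/-- The bracket on `ℝ³` with structure functions `{x,y} = x`, `{x,z} = −x`,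
`{y,z} = −(y+z)` (the Jacobi bracket of the bialgebra
`((III,0),(VI₀.iv, X₂−X₃))` with `σ = 0`). -/
noncomputable def br (f g : (Fin 3 → ℝ) → ℝ) : (Fin 3 → ℝ) → ℝ := fun q =>
  q 0 * (pd 0 f q * pd 1 g q - pd 1 f q * pd 0 g q)
    - q 0 * (pd 0 f q * pd 2 g q - pd 2 f q * pd 0 g q)
    - (q 1 + q 2) * (pd 1 f q * pd 2 g q - pd 2 f q * pd 1 g q)

lemma contDiff_pd (i : Fin 3) {f : (Fin 3 → ℝ) → ℝ} (hf : ContDiff ℝ (⊤ : ℕ∞) f) :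
    ContDiff ℝ (⊤ : ℕ∞) (pd i f) :=
  (hf.fderiv_right (by simp)).clm_apply contDiff_const

lemma pd_mul (i : Fin 3) {a b : (Fin 3 → ℝ) → ℝ} {q : Fin 3 → ℝ}
    (ha : DifferentiableAt ℝ a q) (hb : DifferentiableAt ℝ b q) :
    pd i (fun x => a x * b x) q = pd i a q * b q + a q * pd i b q := by
  unfold pd
  rw [fderiv_fun_mul ha hb]
  simp
  ring

lemma pd_sub (i : Fin 3) {a b : (Fin 3 → ℝ) → ℝ} {q : Fin 3 → ℝ}
    (ha : DifferentiableAt ℝ a q) (hb : DifferentiableAt ℝ b q) :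
    pd i (fun x => a x - b x) q = pd i a q - pd i b q := by
  unfold pd
  rw [fderiv_fun_sub ha hb]
  simp

lemma pd_coord (i j : Fin 3) (q : Fin 3 → ℝ) :
    pd i (fun x => x j) q = if j = i then 1 else 0 := by
  have : fderiv ℝ (fun x : Fin 3 → ℝ => x j) q
      = (ContinuousLinearMap.proj j : (Fin 3 → ℝ) →L[ℝ] ℝ) :=
    (ContinuousLinearMap.proj j : (Fin 3 → ℝ) →L[ℝ] ℝ).hasFDerivAt.fderiv
  simp [pd, this, Pi.single_apply]

lemma pd_coord_add (i : Fin 3) (q : Fin 3 → ℝ) :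
    pd i (fun x => x 1 + x 2) q
      = (if (1 : Fin 3) = i then 1 else 0) + (if (2 : Fin 3) = i then 1 else 0) := by
  have h1 : DifferentiableAt ℝ (fun x : Fin 3 → ℝ => x 1) q := differentiableAt_apply (𝕜 := ℝ) _ _
  have h2 : DifferentiableAt ℝ (fun x : Fin 3 → ℝ => x 2) q := differentiableAt_apply (𝕜 := ℝ) _ _
  unfold pd
  rw [fderiv_fun_add h1 h2]
  have := pd_coord i 1 q
  have := pd_coord i 2 q
  simp only [pd] at *
  simp_all

lemma pd_br (i : Fin 3) {g h : (Fin 3 → ℝ) → ℝ}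
    (hg : ContDiff ℝ (⊤ : ℕ∞) g) (hh : ContDiff ℝ (⊤ : ℕ∞) h) (q : Fin 3 → ℝ) :
    pd i (br g h) q =
      ((if (0 : Fin 3) = i then 1 else 0) * (pd 0 g q * pd 1 h q - pd 1 g q * pd 0 h q)
        + q 0 * ((pd i (pd 0 g) q * pd 1 h q + pd 0 g q * pd i (pd 1 h) q)
            - (pd i (pd 1 g) q * pd 0 h q + pd 1 g q * pd i (pd 0 h) q)))
      - ((if (0 : Fin 3) = i then 1 else 0) * (pd 0 g q * pd 2 h q - pd 2 g q * pd 0 h q)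
        + q 0 * ((pd i (pd 0 g) q * pd 2 h q + pd 0 g q * pd i (pd 2 h) q)
            - (pd i (pd 2 g) q * pd 0 h q + pd 2 g q * pd i (pd 0 h) q)))
      - (((if (1 : Fin 3) = i then 1 else 0) + (if (2 : Fin 3) = i then 1 else 0))
            * (pd 1 g q * pd 2 h q - pd 2 g q * pd 1 h q)
        + (q 1 + q 2) * ((pd i (pd 1 g) q * pd 2 h q + pd 1 g q * pd i (pd 2 h) q)
            - (pd i (pd 2 g) q * pd 1 h q + pd 2 g q * pd i (pd 1 h) q))) := by
  have Dg : ∀ j : Fin 3, Differentiable ℝ (pd j g) :=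
    fun j => (contDiff_pd j hg).differentiable (by simp)
  have Dh : ∀ j : Fin 3, Differentiable ℝ (pd j h) :=
    fun j => (contDiff_pd j hh).differentiable (by simp)
  have Dx0 : DifferentiableAt ℝ (fun x : Fin 3 → ℝ => x 0) q :=
    differentiableAt_apply (𝕜 := ℝ) _ _
  have Dx12 : DifferentiableAt ℝ (fun x : Fin 3 → ℝ => x 1 + x 2) q :=
    (differentiableAt_apply (𝕜 := ℝ) _ _).add (differentiableAt_apply (𝕜 := ℝ) _ _)
  have DA : DifferentiableAt ℝ (fun x => pd 0 g x * pd 1 h x - pd 1 g x * pd 0 h x) q :=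
    ((Dg 0 q).mul (Dh 1 q)).sub ((Dg 1 q).mul (Dh 0 q))
  have DB : DifferentiableAt ℝ (fun x => pd 0 g x * pd 2 h x - pd 2 g x * pd 0 h x) q :=
    ((Dg 0 q).mul (Dh 2 q)).sub ((Dg 2 q).mul (Dh 0 q))
  have DC : DifferentiableAt ℝ (fun x => pd 1 g x * pd 2 h x - pd 2 g x * pd 1 h x) q :=
    ((Dg 1 q).mul (Dh 2 q)).sub ((Dg 2 q).mul (Dh 1 q))
  have e : br g h = fun x =>
      (x 0 * (pd 0 g x * pd 1 h x - pd 1 g x * pd 0 h x)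
        - x 0 * (pd 0 g x * pd 2 h x - pd 2 g x * pd 0 h x))
      - (x 1 + x 2) * (pd 1 g x * pd 2 h x - pd 2 g x * pd 1 h x) := rfl
  rw [e]
  rw [pd_sub i ((Dx0.fun_mul DA).fun_sub (Dx0.fun_mul DB)) (Dx12.fun_mul DC),
    pd_sub i (Dx0.fun_mul DA) (Dx0.fun_mul DB),
    pd_mul i Dx0 DA, pd_mul i Dx0 DB, pd_mul i Dx12 DC,
    pd_sub i ((Dg 0 q).fun_mul (Dh 1 q)) ((Dg 1 q).fun_mul (Dh 0 q)),
    pd_sub i ((Dg 0 q).fun_mul (Dh 2 q)) ((Dg 2 q).fun_mul (Dh 0 q)),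
    pd_sub i ((Dg 1 q).fun_mul (Dh 2 q)) ((Dg 2 q).fun_mul (Dh 1 q)),
    pd_mul i (Dg 0 q) (Dh 1 q), pd_mul i (Dg 1 q) (Dh 0 q),
    pd_mul i (Dg 0 q) (Dh 2 q), pd_mul i (Dg 2 q) (Dh 0 q),
    pd_mul i (Dg 1 q) (Dh 2 q), pd_mul i (Dg 2 q) (Dh 1 q),
    pd_coord i 0, pd_coord_add i]

lemma pd_symm {f : (Fin 3 → ℝ) → ℝ} (hf : ContDiff ℝ (⊤ : ℕ∞) f) (i j : Fin 3) (q : Fin 3 → ℝ) :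
    pd i (pd j f) q = pd j (pd i f) q := by
  have hdf : Differentiable ℝ (fderiv ℝ f) := (hf.fderiv_right (m := (⊤ : ℕ∞)) (by simp)).differentiable (by simp)
  have h1 : ∀ (k : Fin 3) (v : Fin 3 → ℝ), pd k (fun x => fderiv ℝ f x v) q
      = fderiv ℝ (fderiv ℝ f) q (Pi.single k 1) v := by
    intro k v
    unfold pd
    rw [fderiv_clm_apply (hdf q) (differentiableAt_const v)]
    simp
  have hs := second_derivative_symmetric (f' := fderiv ℝ f) (f'' := fderiv ℝ (fderiv ℝ f) q)
    (fun y => (hf.differentiable (by simp) y).hasFDerivAt) ((hdf q).hasFDerivAt)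
    (Pi.single j 1) (Pi.single i 1)
  calc pd i (pd j f) q = fderiv ℝ (fderiv ℝ f) q (Pi.single i 1) (Pi.single j 1) := h1 i _
    _ = fderiv ℝ (fderiv ℝ f) q (Pi.single j 1) (Pi.single i 1) := hs.symm
    _ = pd j (pd i f) q := (h1 j _).symm

/-- The bracket `br` satisfies the Jacobi identity
`{f,{g,h}} + {g,{h,f}} + {h,{f,g}} = 0`. -/
theorem br_jacobi_identity (f g h : (Fin 3 → ℝ) → ℝ)
    (hf : ContDiff ℝ (⊤ : ℕ∞) f) (hg : ContDiff ℝ (⊤ : ℕ∞) g) (hh : ContDiff ℝ (⊤ : ℕ∞) h)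
    (q : Fin 3 → ℝ) :
    br f (br g h) q + br g (br h f) q + br h (br f g) q = 0 := by
  have expand : ∀ a b : (Fin 3 → ℝ) → ℝ, br a b q =
      q 0 * (pd 0 a q * pd 1 b q - pd 1 a q * pd 0 b q)
        - q 0 * (pd 0 a q * pd 2 b q - pd 2 a q * pd 0 b q)
        - (q 1 + q 2) * (pd 1 a q * pd 2 b q - pd 2 a q * pd 1 b q) := fun a b => rfl
  rw [expand f (br g h), expand g (br h f), expand h (br f g),
    pd_br 0 hg hh q, pd_br 1 hg hh q, pd_br 2 hg hh q,
    pd_br 0 hh hf q, pd_br 1 hh hf q, pd_br 2 hh hf q,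
    pd_br 0 hf hg q, pd_br 1 hf hg q, pd_br 2 hf hg q,
    pd_symm hf 1 0 q, pd_symm hf 2 0 q, pd_symm hf 2 1 q,
    pd_symm hg 1 0 q, pd_symm hg 2 0 q, pd_symm hg 2 1 q,
    pd_symm hh 1 0 q, pd_symm hh 2 0 q, pd_symm hh 2 1 q]
  simp only [Fin.isValue, Fin.reduceEq, reduceIte, if_true]
  ring
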